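/- arXiv:1801.02861 — 2 statements merged into one kernel-verified Lean document; each statement's English description precedes it below -/
import Mathlib

section
/- If a set of measurements M on a finite-dimensional space is generated by a closed convex cone C of positive semidefinite operators containing the identity (i.e., M consists of all POVMs whose elements all lie in C), then K_M = (C − 1) ∩ (1 − C), where K_M is the closed convex hull of {2M − 1 : (M, 1−M) a binary measurement in M}. -/
/-! With `X = 2A - 1`, the conditions `A ∈ C` and `1 - A ∈ C` say, since `C` is a cone, exactly
that `X + 1 ∈ C` and `1 - X ∈ C`. So the generating set of `K_M` is already
`(C - 1) ∩ (1 - C)`, which is closed and convex and hence its own closed convex hull. -/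

open scoped BigOperators ComplexOrder

noncomputable section

/-- A POVM (measurement) on a finite-dimensional space. -/
structure POVM (ι : Type) [Fintype ι] [DecidableEq ι] where
  k : ℕ
  T : Fin k → Matrix ι ι ℂ
  pos : ∀ i, (T i).PosSemidef
  sum_eq : ∑ i, T i = 1

variable {ι : Type} [Fintype ι] [DecidableEq ι]

/-- `(A, 1 - A)` is a binary measurement belonging to the measurement class `M`. -/
def IsBinaryIn (M : Set (POVM ι)) (A : Matrix ι ι ℂ) : Prop :=
  ∃ P ∈ M, ∃ _ : P.k = 2, ∀ i : Fin P.k, P.T i = if (i : ℕ) = 0 then A else 1 - A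

/-- The symmetric body `K_M`: the closed convex hull of `{2A - 1 : (A, 1-A) ∈ M}`. -/
def KM (M : Set (POVM ι)) : Set (Matrix ι ι ℂ) :=
  closure (convexHull ℝ {X : Matrix ι ι ℂ | ∃ A, IsBinaryIn M A ∧ X = (2:ℂ) • A - 1})

section Cone

variable {E : Type*} [AddCommGroup E] {C : Set E}

theorem setOf_exists_eq_sub_right (a : E) :
    {X | ∃ c ∈ C, X = c - a} = (· + a) ⁻¹' C := by
  ext X
  exact ⟨by rintro ⟨c, hc, rfl⟩; simpa using hc, fun h => ⟨X + a, h, by abel⟩⟩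

theorem setOf_exists_eq_sub_left (a : E) :
    {X | ∃ c ∈ C, X = a - c} = (a - ·) ⁻¹' C := by
  ext X
  exact ⟨by rintro ⟨c, hc, rfl⟩; simpa using hc, fun h => ⟨a - X, h, by abel⟩⟩

theorem Convex.setOf_exists_eq_sub_inter [Module ℝ E] (hC : Convex ℝ C) (a : E) :
    Convex ℝ ({X | ∃ c ∈ C, X = c - a} ∩ {X | ∃ c ∈ C, X = a - c}) := by
  rw [setOf_exists_eq_sub_right, setOf_exists_eq_sub_left]
  exact (hC.translate_preimage_left a).inter
    (hC.affine_preimage (AffineMap.const ℝ E a - AffineMap.id ℝ E))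

theorem IsClosed.setOf_exists_eq_sub_inter [TopologicalSpace E] [IsTopologicalAddGroup E]
    (hC : IsClosed C) (a : E) :
    IsClosed ({X | ∃ c ∈ C, X = c - a} ∩ {X | ∃ c ∈ C, X = a - c}) := by
  rw [setOf_exists_eq_sub_right, setOf_exists_eq_sub_left]
  exact (hC.preimage (continuous_add_const a)).inter (hC.preimage (continuous_sub_left a))

theorem exists_add_self_sub_iff [Module ℝ E] (hcone : ∀ c ∈ C, ∀ t : ℝ, 0 ≤ t → t • c ∈ C)
    (a X : E) :
    (∃ A, (A ∈ C ∧ a - A ∈ C) ∧ X = A + A - a) ↔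
      (∃ c ∈ C, X = c - a) ∧ (∃ c ∈ C, X = a - c) := by
  constructor
  · rintro ⟨A, ⟨hA, haA⟩, rfl⟩
    exact ⟨⟨(2 : ℝ) • A, hcone A hA 2 zero_le_two, by module⟩,
      ⟨(2 : ℝ) • (a - A), hcone _ haA 2 zero_le_two, by module⟩⟩
  · rintro ⟨⟨c, hc, rfl⟩, c', hc', hcc'⟩
    refine ⟨(2⁻¹ : ℝ) • c, ⟨hcone c hc _ (by norm_num), ?_⟩, by module⟩
    convert hcone c' hc' 2⁻¹ (by norm_num) using 1
    linear_combination (norm := module) (-2⁻¹ : ℝ) • hcc'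

end Cone

theorem isBinaryIn_setOf_forall_mem_iff {C : Set (Matrix ι ι ℂ)}
    (hpsd : ∀ c ∈ C, c.PosSemidef) {A : Matrix ι ι ℂ} :
    IsBinaryIn {P : POVM ι | ∀ i, P.T i ∈ C} A ↔ A ∈ C ∧ 1 - A ∈ C := by
  constructor
  · rintro ⟨P, hP, hk, hT⟩
    have h0 := hP ⟨0, by omega⟩
    have h1 := hP ⟨1, by omega⟩
    rw [hT] at h0 h1
    exact ⟨h0, h1⟩
  · rintro ⟨hA, h1A⟩
    let P : POVM ι := ⟨2, ![A, 1 - A], Fin.forall_fin_two.2 ⟨hpsd A hA, hpsd _ h1A⟩, by simp⟩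
    exact ⟨P, Fin.forall_fin_two.2 ⟨hA, h1A⟩, rfl, Fin.forall_fin_two.2 ⟨rfl, rfl⟩⟩

theorem KM_eq_of_cone_general (C : Set (Matrix ι ι ℂ))
    (hclosed : IsClosed C) (hconv : Convex ℝ C)
    (hcone : ∀ c ∈ C, ∀ t : ℝ, 0 ≤ t → t • c ∈ C)
    (hpsd : ∀ c ∈ C, Matrix.PosSemidef c) :
    KM {P : POVM ι | ∀ i, P.T i ∈ C}
      = {X : Matrix ι ι ℂ | ∃ c ∈ C, X = c - 1} ∩ {X : Matrix ι ι ℂ | ∃ c ∈ C, X = 1 - c} := by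
  have hgen : {X | ∃ A, IsBinaryIn {P : POVM ι | ∀ i, P.T i ∈ C} A ∧ X = (2 : ℂ) • A - 1} =
      {X | ∃ c ∈ C, X = c - 1} ∩ {X | ∃ c ∈ C, X = 1 - c} := by
    ext X
    simp only [isBinaryIn_setOf_forall_mem_iff hpsd, two_smul]
    exact exists_add_self_sub_iff hcone 1 X
  rw [KM, hgen, (hconv.setOf_exists_eq_sub_inter 1).convexHull_eq,
    (hclosed.setOf_exists_eq_sub_inter 1).closure_eq]

/-- If `M` consists of all POVMs whose elements lie in a closed convex cone
`C` of positive semidefinite operators with `1 ∈ C`, then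
`K_M = (C − 1) ∩ (1 − C)`. -/
theorem KM_eq_of_cone (C : Set (Matrix ι ι ℂ))
    (hclosed : IsClosed C) (hconv : Convex ℝ C)
    (hcone : ∀ c ∈ C, ∀ t : ℝ, 0 ≤ t → t • c ∈ C)
    (hpsd : ∀ c ∈ C, Matrix.PosSemidef c) (hone : (1 : Matrix ι ι ℂ) ∈ C) :
    KM {P : POVM ι | ∀ i, P.T i ∈ C}
      = {X : Matrix ι ι ℂ | ∃ c ∈ C, X = c - 1} ∩ {X : Matrix ι ι ℂ | ∃ c ∈ C, X = 1 - c} :=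
  KM_eq_of_cone_general C hclosed hconv hcone hpsd

end
end

section
/- Let M be either the class of separable measurements or PPT measurements, with corresponding state set K being the separable or PPT states. For any Hermitian X on A'B' and any state ρ on CD: (i) ‖X‖_{M(A':B')} ≤ ‖ρ ⊗ X‖_{M(CA':DB')}; (ii) if moreover ρ ∈ K(C:D), then equality holds. -/
/-!
A measurement `{Tᵢ}` on `A'B'` lifts to `{1 ⊗ Tᵢ}` on `CA' : DB'`; the lift is again separable
(resp. PPT) and, because `Tr ρ = 1`, has the same outcome statistics on `ρ ⊗ X` as `{Tᵢ}` on `X`.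
This gives the inequalities. Conversely, a measurement `{Qᵢ}` on `CA' : DB'` is pulled back along
the trace-dual of `X ↦ ρ ⊗ X`, the `ρ`-weighted partial trace over `CD`. That map is positive
(a Kraus decomposition of `ρ`), unital, and keeps the outcome statistics; when `ρ` is separable
(resp. PPT) it also sends separable (resp. PPT) elements to separable (resp. PPT) ones. Then the
two sets of achievable values coincide, and so do their suprema.
-/

open scoped BigOperators ComplexOrder

noncomputable section

/-- The ℓ1 norm of the outcome vector of the measurement `P` applied to `X`. -/
def mval {ι : Type} [Fintype ι] [DecidableEq ι] (P : POVM ι) (X : Matrix ι ι ℂ) : ℝ :=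
  ∑ i, ‖(P.T i * X).trace‖

/-- Tensor (product) of an operator on `α` and one on `β`. -/
def prodOp {α β : Type} (x : Matrix α α ℂ) (y : Matrix β β ℂ) : Matrix (α × β) (α × β) ℂ :=
  fun p q => x p.1 q.1 * y p.2 q.2

/-- The set of separable states across the cut `α : β`. -/
def SepStates (α β : Type) [Fintype α] [Fintype β] : Set (Matrix (α × β) (α × β) ℂ) :=
  convexHull ℝ {σ : Matrix (α × β) (α × β) ℂ |
    ∃ (x : Matrix α α ℂ) (y : Matrix β β ℂ),
      x.PosSemidef ∧ x.trace = 1 ∧ y.PosSemidef ∧ y.trace = 1 ∧ σ = prodOp x y}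

/-- The cone generated by separable states. -/
def SepCone (α β : Type) [Fintype α] [Fintype β] : Set (Matrix (α × β) (α × β) ℂ) :=
  {T | ∃ (t : ℝ) (σ : Matrix (α × β) (α × β) ℂ), 0 ≤ t ∧ σ ∈ SepStates α β ∧ T = t • σ}

/-- Partial transposition (on the second factor). -/
def ptranspose {α β : Type} (ρ : Matrix (α × β) (α × β) ℂ) : Matrix (α × β) (α × β) ℂ :=
  fun p q => ρ (p.1, q.2) (q.1, p.2)

/-- The trace norm restricted to separable measurements (POVMs whose elements lie in the
cone generated by separable states). -/
def sepNorm {α β : Type} [Fintype α] [DecidableEq α] [Fintype β] [DecidableEq β]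
    (X : Matrix (α × β) (α × β) ℂ) : ℝ :=
  sSup {r : ℝ | ∃ P : POVM (α × β), (∀ i, P.T i ∈ SepCone α β) ∧ r = mval P X}

/-- The trace norm restricted to PPT measurements (POVMs whose elements have positive
semidefinite partial transpose). -/
def pptNorm {α β : Type} [Fintype α] [DecidableEq α] [Fintype β] [DecidableEq β]
    (X : Matrix (α × β) (α × β) ℂ) : ℝ :=
  sSup {r : ℝ | ∃ P : POVM (α × β), (∀ i, (ptranspose (P.T i)).PosSemidef) ∧ r = mval P X}

/-- Tensor product of a bipartite operator on `C:D` with one on `A':B'`, arranged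
according to the bipartite cut `CA' : DB'`. -/
def tensorBip {α β γ δ : Type} (Y : Matrix (α × β) (α × β) ℂ) (X : Matrix (γ × δ) (γ × δ) ℂ) :
    Matrix ((α × γ) × (β × δ)) ((α × γ) × (β × δ)) ℂ :=
  fun p q => Y (p.1.1, p.2.1) (q.1.1, q.2.1) * X (p.1.2, p.2.2) (q.1.2, q.2.2)

open Matrix
open scoped Kronecker MatrixOrder ComplexStarModule

section TraceBounds
variable {ι : Type} [Fintype ι]

theorem Matrix.PosSemidef.trace_mul_nonneg {A B : Matrix ι ι ℂ} (hA : A.PosSemidef)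
    (hB : B.PosSemidef) : 0 ≤ (A * B).trace := by
  classical
  obtain ⟨C, rfl⟩ := CStarAlgebra.nonneg_iff_eq_star_mul_self.mp hB.nonneg
  rw [← mul_assoc, trace_mul_cycle, star_eq_conjTranspose]
  exact (hA.mul_mul_conjTranspose_same C).trace_nonneg

theorem exists_norm_trace_mul_le_of_isSelfAdjoint [DecidableEq ι] {H : Matrix ι ι ℂ}
    (hH : IsSelfAdjoint H) :
    ∃ A : Matrix ι ι ℂ, ∀ P : Matrix ι ι ℂ, P.PosSemidef → ‖(P * H).trace‖ ≤ (P * A).trace.re := by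
  refine ⟨H⁺ + H⁻, fun P hP => ?_⟩
  have hpos := hP.trace_mul_nonneg (CFC.posPart_nonneg H).posSemidef
  have hneg := hP.trace_mul_nonneg (CFC.negPart_nonneg H).posSemidef
  calc ‖(P * H).trace‖ = ‖(P * H⁺).trace - (P * H⁻).trace‖ := by
        rw [← trace_sub, ← mul_sub, CFC.posPart_sub_negPart H hH]
    _ ≤ ‖(P * H⁺).trace‖ + ‖(P * H⁻).trace‖ := norm_sub_le _ _
    _ = (P * (H⁺ + H⁻)).trace.re := by
        rw [mul_add, trace_add, Complex.add_re, ← Complex.re_eq_norm.mpr hpos,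
          ← Complex.re_eq_norm.mpr hneg]

theorem exists_norm_trace_mul_le [DecidableEq ι] (X : Matrix ι ι ℂ) :
    ∃ A : Matrix ι ι ℂ, ∀ P : Matrix ι ι ℂ, P.PosSemidef → ‖(P * X).trace‖ ≤ (P * A).trace.re := by
  obtain ⟨A, hA⟩ := exists_norm_trace_mul_le_of_isSelfAdjoint (ℜ X).2
  obtain ⟨B, hB⟩ := exists_norm_trace_mul_le_of_isSelfAdjoint (ℑ X).2
  refine ⟨A + B, fun P hP => ?_⟩
  calc ‖(P * X).trace‖ = ‖(P * ℜ X).trace + Complex.I • (P * ℑ X).trace‖ := by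
        rw [← trace_smul, ← mul_smul_comm, ← trace_add, ← mul_add,
          realPart_add_I_smul_imaginaryPart]
    _ ≤ ‖(P * ℜ X).trace‖ + ‖(P * ℑ X).trace‖ := by
        simpa using norm_add_le (P * ℜ X).trace (Complex.I • (P * ℑ X).trace)
    _ ≤ (P * (A + B)).trace.re := by
        rw [mul_add, trace_add, Complex.add_re]
        exact add_le_add (hA P hP) (hB P hP)

end TraceBounds

section Measurements
variable {ι κ : Type} [Fintype ι] [DecidableEq ι] [Fintype κ] [DecidableEq κ]

def POVM.map (P : POVM ι) (Φ : Matrix ι ι ℂ →ₗ[ℝ] Matrix κ κ ℂ)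
    (hΦ : ∀ T, T.PosSemidef → (Φ T).PosSemidef) (hΦ₁ : Φ 1 = 1) : POVM κ where
  k := P.k
  T i := Φ (P.T i)
  pos i := hΦ _ (P.pos i)
  sum_eq := by rw [← map_sum, P.sum_eq, hΦ₁]

theorem mval_nonneg (P : POVM ι) (X : Matrix ι ι ℂ) : 0 ≤ mval P X :=
  Finset.sum_nonneg fun _ _ => norm_nonneg _

theorem exists_mval_le (X : Matrix ι ι ℂ) : ∃ c : ℝ, ∀ P : POVM ι, mval P X ≤ c := by
  obtain ⟨A, hA⟩ := exists_norm_trace_mul_le X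
  refine ⟨A.trace.re, fun P => ?_⟩
  calc mval P X ≤ ∑ i, (P.T i * A).trace.re := Finset.sum_le_sum fun i _ => hA _ (P.pos i)
    _ = A.trace.re := by rw [← Complex.re_sum, ← trace_sum, ← Finset.sum_mul, P.sum_eq, one_mul]

def mvalSet (C : Matrix ι ι ℂ → Prop) (X : Matrix ι ι ℂ) : Set ℝ :=
  {r | ∃ P : POVM ι, (∀ i, C (P.T i)) ∧ r = mval P X}

theorem sSup_mvalSet_mono {C : Matrix ι ι ℂ → Prop} {D : Matrix κ κ ℂ → Prop}
    {X : Matrix ι ι ℂ} {Y : Matrix κ κ ℂ} (h : mvalSet C X ⊆ mvalSet D Y) :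
    sSup (mvalSet C X) ≤ sSup (mvalSet D Y) := by
  rcases (mvalSet C X).eq_empty_or_nonempty with hempty | hne
  -- `sSup ∅ = 0` in `ℝ`, so here nonnegativity of the values suffices.
  · rw [hempty, Real.sSup_empty]
    exact Real.sSup_nonneg fun r ⟨P, _, hr⟩ => hr ▸ mval_nonneg P Y
  · obtain ⟨c, hc⟩ := exists_mval_le Y
    exact csSup_le_csSup ⟨c, fun r ⟨P, _, hr⟩ => hr ▸ hc P⟩ hne h

theorem mvalSet_subset_of_dual {C : Matrix ι ι ℂ → Prop} {D : Matrix κ κ ℂ → Prop}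
    {X : Matrix ι ι ℂ} {Y : Matrix κ κ ℂ} (Φ : Matrix ι ι ℂ →ₗ[ℝ] Matrix κ κ ℂ)
    (hΦ : ∀ T, T.PosSemidef → (Φ T).PosSemidef) (hΦ₁ : Φ 1 = 1) (hCD : ∀ T, C T → D (Φ T))
    (hdual : ∀ T, (Φ T * Y).trace = (T * X).trace) : mvalSet C X ⊆ mvalSet D Y := by
  rintro r ⟨P, hP, rfl⟩
  exact ⟨P.map Φ hΦ hΦ₁, fun i => hCD _ (hP i),
    Finset.sum_congr rfl fun i _ => by rw [← hdual]; rfl⟩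

end Measurements

theorem Matrix.trace_submatrix_equiv {R l m : Type} [AddCommMonoid R] [Fintype l] [Fintype m]
    (M : Matrix m m R) (e : l ≃ m) : (M.submatrix e e).trace = M.trace :=
  Fintype.sum_equiv e _ _ fun _ => rfl

section Tensor
variable {α β γ δ : Type}

theorem prodOp_eq_kronecker (x : Matrix α α ℂ) (y : Matrix β β ℂ) : prodOp x y = x ⊗ₖ y := rfl

theorem tensorBip_eq_submatrix (Y : Matrix (α × β) (α × β) ℂ) (X : Matrix (γ × δ) (γ × δ) ℂ) :
    tensorBip Y X =
      (Y ⊗ₖ X).submatrix (Equiv.prodProdProdComm α γ β δ) (Equiv.prodProdProdComm α γ β δ) :=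
  rfl

theorem tensorBip_kronecker_kronecker (x : Matrix α α ℂ) (y : Matrix β β ℂ) (u : Matrix γ γ ℂ)
    (v : Matrix δ δ ℂ) : tensorBip (x ⊗ₖ y) (u ⊗ₖ v) = (x ⊗ₖ u) ⊗ₖ (y ⊗ₖ v) := by
  ext p q
  simp only [tensorBip, kroneckerMap_apply]
  ring

theorem ptranspose_tensorBip (Y : Matrix (α × β) (α × β) ℂ) (X : Matrix (γ × δ) (γ × δ) ℂ) :
    ptranspose (tensorBip Y X) = tensorBip (ptranspose Y) (ptranspose X) := rfl

theorem ptranspose_one [DecidableEq α] [DecidableEq β] :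
    ptranspose (1 : Matrix (α × β) (α × β) ℂ) = 1 := by
  ext ⟨a, b⟩ ⟨c, d⟩
  simp only [ptranspose, one_apply, Prod.mk.injEq, eq_comm (a := d)]

theorem tensorBip_one [DecidableEq α] [DecidableEq β] [DecidableEq γ] [DecidableEq δ] :
    tensorBip (1 : Matrix (α × β) (α × β) ℂ) (1 : Matrix (γ × δ) (γ × δ) ℂ) = 1 := by
  rw [tensorBip_eq_submatrix, one_kronecker_one, submatrix_one_equiv]

variable (α β γ δ) in
def tensorBipₗ :
    Matrix (α × β) (α × β) ℂ →ₗ[ℝ] Matrix (γ × δ) (γ × δ) ℂ →ₗ[ℝ]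
      Matrix ((α × γ) × (β × δ)) ((α × γ) × (β × δ)) ℂ :=
  LinearMap.mk₂ ℝ tensorBip
    (fun _ _ _ => by ext; simp [tensorBip, add_mul])
    (fun _ _ _ => by ext; simp [tensorBip, mul_assoc])
    (fun _ _ _ => by ext; simp [tensorBip, mul_add])
    (fun _ _ _ => by ext; simp [tensorBip, mul_left_comm])

variable [Fintype α] [Fintype β] [Fintype γ] [Fintype δ]

theorem tensorBip_mul (Y Y' : Matrix (α × β) (α × β) ℂ) (X X' : Matrix (γ × δ) (γ × δ) ℂ) :
    tensorBip Y X * tensorBip Y' X' = tensorBip (Y * Y') (X * X') := by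
  simp only [tensorBip_eq_submatrix, submatrix_mul_equiv, mul_kronecker_mul]

theorem trace_tensorBip (Y : Matrix (α × β) (α × β) ℂ) (X : Matrix (γ × δ) (γ × δ) ℂ) :
    (tensorBip Y X).trace = Y.trace * X.trace := by
  rw [tensorBip_eq_submatrix, trace_submatrix_equiv, trace_kronecker]

theorem Matrix.PosSemidef.tensorBip {Y : Matrix (α × β) (α × β) ℂ} {X : Matrix (γ × δ) (γ × δ) ℂ}
    (hY : Y.PosSemidef) (hX : X.PosSemidef) : (_root_.tensorBip Y X).PosSemidef := by
  rw [tensorBip_eq_submatrix]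
  exact (hY.kronecker hX).submatrix _

end Tensor

theorem Matrix.nonempty_of_trace_eq_one {ι : Type} [Fintype ι] {x : Matrix ι ι ℂ}
    (h : x.trace = 1) : Nonempty ι := by
  by_contra hempty
  rw [not_nonempty_iff] at hempty
  simp [trace_eq_zero_of_isEmpty] at h

theorem Matrix.PosSemidef.exists_eq_smul_trace_one {ι : Type} [Fintype ι] [Nonempty ι]
    {a : Matrix ι ι ℂ} (ha : a.PosSemidef) :
    ∃ t : ℝ, 0 ≤ t ∧ ∃ x : Matrix ι ι ℂ, x.PosSemidef ∧ x.trace = 1 ∧ a = t • x := by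
  classical
  by_cases h0 : a.trace = 0
  · let i := Classical.arbitrary ι
    refine ⟨0, le_rfl, diagonal (Pi.single i 1), ?_, by simp [trace_diagonal], ?_⟩
    · exact posSemidef_diagonal_iff.mpr (Pi.single_nonneg.mpr zero_le_one)
    · rw [zero_smul, ← ha.trace_eq_zero_iff, h0]
  · set t := a.trace.re
    have ht : a.trace = t := Complex.eq_re_of_ofReal_le (r := 0) (by simpa using ha.trace_nonneg)
    have ht0 : t ≠ 0 := fun h => h0 (by rw [ht, h, Complex.ofReal_zero])
    have htpos : 0 ≤ t := by simpa using Complex.nonneg_iff.mp ha.trace_nonneg |>.1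
    refine ⟨t, htpos, t⁻¹ • a, ha.smul (inv_nonneg.mpr htpos), ?_, ?_⟩
    · rw [trace_smul, ht, Complex.real_smul, Complex.ofReal_inv,
        inv_mul_cancel₀ (Complex.ofReal_ne_zero.mpr ht0)]
    · rw [smul_smul, mul_inv_cancel₀ ht0, one_smul]

section Separable
variable {α β γ δ : Type} [Fintype α] [Fintype β] [Fintype γ] [Fintype δ]

theorem mem_sepCone_of_mem_sepStates {σ : Matrix (α × β) (α × β) ℂ} (h : σ ∈ SepStates α β) :
    σ ∈ SepCone α β :=
  ⟨1, σ, zero_le_one, h, (one_smul _ _).symm⟩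

theorem smul_mem_sepCone {t : ℝ} (ht : 0 ≤ t) {T : Matrix (α × β) (α × β) ℂ}
    (h : T ∈ SepCone α β) : t • T ∈ SepCone α β := by
  obtain ⟨s, σ, hs, hσ, rfl⟩ := h
  exact ⟨t * s, σ, mul_nonneg ht hs, hσ, smul_smul t s σ⟩

theorem add_mem_sepCone {S T : Matrix (α × β) (α × β) ℂ} (hS : S ∈ SepCone α β)
    (hT : T ∈ SepCone α β) : S + T ∈ SepCone α β := by
  obtain ⟨s, σ, hs, hσ, rfl⟩ := hS
  obtain ⟨t, τ, ht, hτ, rfl⟩ := hT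
  rcases (add_nonneg hs ht).eq_or_lt with h | hpos
  · obtain ⟨rfl, rfl⟩ := (add_eq_zero_iff_of_nonneg hs ht).mp h.symm
    exact ⟨0, σ, le_rfl, hσ, by simp⟩
  · refine ⟨s + t, (s / (s + t)) • σ + (t / (s + t)) • τ, hpos.le,
      convex_convexHull ℝ _ hσ hτ (by positivity) (by positivity) (by field_simp), ?_⟩
    rw [smul_add, smul_smul, smul_smul, mul_div_cancel₀ _ hpos.ne',
      mul_div_cancel₀ _ hpos.ne']

theorem convex_sepCone : Convex ℝ (SepCone α β) := fun _ hS _ hT _ _ ha hb _ =>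
  add_mem_sepCone (smul_mem_sepCone ha hS) (smul_mem_sepCone hb hT)

theorem kronecker_mem_sepCone [Nonempty α] [Nonempty β]
    {a : Matrix α α ℂ} {b : Matrix β β ℂ} (ha : a.PosSemidef) (hb : b.PosSemidef) :
    a ⊗ₖ b ∈ SepCone α β := by
  obtain ⟨s, hs, x, hx, hx1, rfl⟩ := ha.exists_eq_smul_trace_one
  obtain ⟨t, ht, y, hy, hy1, rfl⟩ := hb.exists_eq_smul_trace_one
  refine ⟨s * t, x ⊗ₖ y, mul_nonneg hs ht,
    subset_convexHull ℝ _ ⟨x, y, hx, hx1, hy, hy1, rfl⟩, ?_⟩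
  rw [smul_kronecker, kronecker_smul, smul_smul, mul_comm]

theorem one_mem_sepCone [DecidableEq α] [DecidableEq β] [Nonempty α] [Nonempty β] :
    (1 : Matrix (α × β) (α × β) ℂ) ∈ SepCone α β := by
  simpa using kronecker_mem_sepCone (PosSemidef.one (n := α)) (PosSemidef.one (n := β))

end Separable

theorem LinearMap.mem_of_mem_convexHull₂ {E F G : Type} [AddCommGroup E] [Module ℝ E]
    [AddCommGroup F] [Module ℝ F] [AddCommGroup G] [Module ℝ G] (f : E →ₗ[ℝ] F →ₗ[ℝ] G)
    {s : Set E} {t : Set F} {K : Set G} (hK : Convex ℝ K) (h : ∀ x ∈ s, ∀ y ∈ t, f x y ∈ K)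
    {x : E} {y : F} (hx : x ∈ convexHull ℝ s) (hy : y ∈ convexHull ℝ t) : f x y ∈ K :=
  convexHull_min (fun x' hx' => convexHull_min (h x' hx') (hK.linear_preimage (f x')) hy)
    (hK.linear_preimage (f.flip y)) hx

section SeparableTensor
variable {α β γ δ : Type} [Fintype α] [Fintype β] [Fintype γ] [Fintype δ]

theorem tensorBip_mem_sepStates {σ : Matrix (α × β) (α × β) ℂ} {τ : Matrix (γ × δ) (γ × δ) ℂ}
    (hσ : σ ∈ SepStates α β) (hτ : τ ∈ SepStates γ δ) :
    tensorBip σ τ ∈ SepStates (α × γ) (β × δ) := by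
  refine (tensorBipₗ α β γ δ).mem_of_mem_convexHull₂ (convex_convexHull ℝ _) ?_ hσ hτ
  rintro _ ⟨x, y, hx, hx1, hy, hy1, rfl⟩ _ ⟨u, v, hu, hu1, hv, hv1, rfl⟩
  refine subset_convexHull ℝ _ ⟨x ⊗ₖ u, y ⊗ₖ v, hx.kronecker hu, ?_, hy.kronecker hv, ?_,
    tensorBip_kronecker_kronecker x y u v⟩ <;>
  simp [trace_kronecker, *]

theorem tensorBip_mem_sepCone {S : Matrix (α × β) (α × β) ℂ} {T : Matrix (γ × δ) (γ × δ) ℂ}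
    (hS : S ∈ SepCone α β) (hT : T ∈ SepCone γ δ) :
    tensorBip S T ∈ SepCone (α × γ) (β × δ) := by
  obtain ⟨s, σ, hs, hσ, rfl⟩ := hS
  obtain ⟨t, τ, ht, hτ, rfl⟩ := hT
  have hlin : tensorBip (s • σ) (t • τ) = s • t • tensorBip σ τ := by
    change tensorBipₗ α β γ δ (s • σ) (t • τ) = s • t • tensorBipₗ α β γ δ σ τ
    rw [LinearMap.map_smul₂, map_smul]
  rw [hlin]
  exact smul_mem_sepCone hs (smul_mem_sepCone ht
    (mem_sepCone_of_mem_sepStates (tensorBip_mem_sepStates hσ hτ)))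

end SeparableTensor

section PartialTrace
variable {ε ζ : Type} [Fintype ε]

/-- `partialTraceWith m w = Tr_ε ((mᵀ ⊗ 1) w)`. -/
def partialTraceWith (m : Matrix ε ε ℂ) (w : Matrix (ε × ζ) (ε × ζ) ℂ) : Matrix ζ ζ ℂ :=
  of fun p q => ∑ i, ∑ j, w (i, p) (j, q) * m j i

theorem partialTraceWith_star_mul_self [Fintype ζ] [DecidableEq ζ] (C : Matrix ε ε ℂ)
    (w : Matrix (ε × ζ) (ε × ζ) ℂ) :
    let V : ε → Matrix ζ (ε × ζ) ℂ := fun k => of fun p u => if u.2 = p then C k u.1 else 0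
    partialTraceWith (star C * C) w = ∑ k, V k * w * (V k)ᴴ := by
  intro V
  ext p q
  simp only [V, partialTraceWith, Matrix.sum_apply, mul_apply, conjTranspose_apply, of_apply,
    Fintype.sum_prod_type, ite_mul, zero_mul, mul_ite, mul_zero, apply_ite (star : ℂ → ℂ),
    star_zero, Finset.sum_ite_eq', Finset.mem_univ, if_true, Finset.sum_mul, Finset.mul_sum,
    star_apply]
  rw [Finset.sum_comm]
  conv_rhs => rw [Finset.sum_comm]
  refine Finset.sum_congr rfl fun j _ => ?_
  rw [Finset.sum_comm]
  exact Finset.sum_congr rfl fun k _ => Finset.sum_congr rfl fun i _ => by ring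

theorem Matrix.PosSemidef.partialTraceWith [Fintype ζ] {m : Matrix ε ε ℂ}
    {w : Matrix (ε × ζ) (ε × ζ) ℂ} (hm : m.PosSemidef) (hw : w.PosSemidef) : (_root_.partialTraceWith m w).PosSemidef := by
  classical
  obtain ⟨C, rfl⟩ := CStarAlgebra.nonneg_iff_eq_star_mul_self.mp hm.nonneg
  rw [partialTraceWith_star_mul_self]
  exact posSemidef_sum _ fun k _ => hw.mul_mul_conjTranspose_same _

theorem trace_partialTraceWith_mul [Fintype ζ] (m : Matrix ε ε ℂ) (w : Matrix (ε × ζ) (ε × ζ) ℂ)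
    (X : Matrix ζ ζ ℂ) : (partialTraceWith m w * X).trace = (w * (m ⊗ₖ X)).trace := by
  simp only [trace, diag, mul_apply, partialTraceWith, of_apply, kroneckerMap_apply,
    Finset.sum_mul, Fintype.sum_prod_type]
  conv_lhs => enter [2, p]; rw [Finset.sum_comm]; enter [2, i]; rw [Finset.sum_comm]
  rw [Finset.sum_comm]
  simp only [mul_assoc]

theorem partialTraceWith_one [DecidableEq ε] [DecidableEq ζ] (m : Matrix ε ε ℂ) :
    partialTraceWith m (1 : Matrix (ε × ζ) (ε × ζ) ℂ) = m.trace • 1 := by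
  ext p q
  simp only [partialTraceWith, of_apply, one_apply, Prod.mk.injEq, ite_and, ite_mul, one_mul,
    zero_mul, Matrix.smul_apply, trace, diag, smul_eq_mul]
  by_cases h : p = q <;> simp [h]

variable (ε ζ) in
def partialTraceWithₗ : Matrix ε ε ℂ →ₗ[ℝ] Matrix (ε × ζ) (ε × ζ) ℂ →ₗ[ℝ] Matrix ζ ζ ℂ :=
  LinearMap.mk₂ ℝ partialTraceWith
    (fun _ _ _ => by ext; simp [partialTraceWith, mul_add, Finset.sum_add_distrib])
    (fun _ _ _ => by ext; simp [partialTraceWith, Finset.smul_sum, mul_left_comm])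
    (fun _ _ _ => by ext; simp [partialTraceWith, add_mul, Finset.sum_add_distrib])
    (fun _ _ _ => by ext; simp [partialTraceWith, Finset.smul_sum, mul_assoc])

end PartialTrace

section TensorDual
variable {α β γ δ : Type} [Fintype α] [Fintype β]

variable (α β γ δ) in
def tensorBipDual :
    Matrix (α × β) (α × β) ℂ →ₗ[ℝ] Matrix ((α × γ) × (β × δ)) ((α × γ) × (β × δ)) ℂ →ₗ[ℝ]
      Matrix (γ × δ) (γ × δ) ℂ :=
  (partialTraceWithₗ (α × β) (γ × δ)).compl₂
    (reindexLinearEquiv ℝ ℂ (Equiv.prodProdProdComm α γ β δ)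
      (Equiv.prodProdProdComm α γ β δ)).toLinearMap

theorem tensorBipDual_apply (ρ : Matrix (α × β) (α × β) ℂ)
    (Q : Matrix ((α × γ) × (β × δ)) ((α × γ) × (β × δ)) ℂ) :
    tensorBipDual α β γ δ ρ Q = partialTraceWith ρ
      (Q.submatrix (Equiv.prodProdProdComm α β γ δ) (Equiv.prodProdProdComm α β γ δ)) :=
  rfl

theorem ptranspose_tensorBipDual (ρ : Matrix (α × β) (α × β) ℂ)
    (Q : Matrix ((α × γ) × (β × δ)) ((α × γ) × (β × δ)) ℂ) :
    ptranspose (tensorBipDual α β γ δ ρ Q) =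
      tensorBipDual α β γ δ (ptranspose ρ) (ptranspose Q) := by
  ext p q
  simp only [ptranspose, tensorBipDual_apply, partialTraceWith, of_apply, submatrix_apply]
  rw [← Fintype.sum_prod_type', ← Fintype.sum_prod_type']
  exact Fintype.sum_equiv ⟨fun z => ((z.1.1, z.2.2), (z.2.1, z.1.2)),
    fun z => ((z.1.1, z.2.2), (z.2.1, z.1.2)), fun _ => rfl, fun _ => rfl⟩ _ _ fun _ => rfl

theorem tensorBipDual_kronecker_kronecker (m : Matrix α α ℂ) (n : Matrix β β ℂ)
    (w : Matrix (α × γ) (α × γ) ℂ) (z : Matrix (β × δ) (β × δ) ℂ) :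
    tensorBipDual α β γ δ (m ⊗ₖ n) (w ⊗ₖ z) = partialTraceWith m w ⊗ₖ partialTraceWith n z := by
  ext p q
  simp only [tensorBipDual_apply, partialTraceWith, of_apply, submatrix_apply, kroneckerMap_apply,
    Fintype.sum_prod_type, Finset.sum_mul_sum, Equiv.prodProdProdComm_apply]
  exact Finset.sum_congr rfl fun _ _ => Finset.sum_congr rfl fun _ _ =>
    Finset.sum_congr rfl fun _ _ => Finset.sum_congr rfl fun _ _ => by ring

theorem tensorBipDual_one [DecidableEq α] [DecidableEq β] [DecidableEq γ] [DecidableEq δ]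
    (ρ : Matrix (α × β) (α × β) ℂ) : tensorBipDual α β γ δ ρ 1 = ρ.trace • 1 := by
  rw [tensorBipDual_apply, submatrix_one_equiv, partialTraceWith_one]

variable [Fintype γ] [Fintype δ]

theorem Matrix.PosSemidef.tensorBipDual {ρ : Matrix (α × β) (α × β) ℂ}
    {Q : Matrix ((α × γ) × (β × δ)) ((α × γ) × (β × δ)) ℂ} (hρ : ρ.PosSemidef)
    (hQ : Q.PosSemidef) : (_root_.tensorBipDual α β γ δ ρ Q).PosSemidef :=
  hρ.partialTraceWith (hQ.submatrix _)

theorem trace_tensorBipDual_mul (ρ : Matrix (α × β) (α × β) ℂ)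
    (Q : Matrix ((α × γ) × (β × δ)) ((α × γ) × (β × δ)) ℂ) (X : Matrix (γ × δ) (γ × δ) ℂ) :
    (tensorBipDual α β γ δ ρ Q * X).trace = (Q * tensorBip ρ X).trace := by
  rw [tensorBipDual_apply, trace_partialTraceWith_mul, tensorBip_eq_submatrix,
    ← trace_submatrix_equiv (Q * _) (Equiv.prodProdProdComm α β γ δ),
    ← submatrix_mul_equiv _ _ _ (Equiv.prodProdProdComm α β γ δ), submatrix_submatrix]
  rfl

end TensorDual

theorem tensorBipDual_mem_sepCone {α β γ δ : Type} [Fintype α] [Fintype β] [Fintype γ]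
    [Fintype δ] {ρ : Matrix (α × β) (α × β) ℂ}
    {Q : Matrix ((α × γ) × (β × δ)) ((α × γ) × (β × δ)) ℂ} (hρ : ρ ∈ SepStates α β)
    (hQ : Q ∈ SepCone (α × γ) (β × δ)) : tensorBipDual α β γ δ ρ Q ∈ SepCone γ δ := by
  obtain ⟨t, σ, ht, hσ, rfl⟩ := hQ
  rw [map_smul]
  refine smul_mem_sepCone ht
    ((tensorBipDual α β γ δ).mem_of_mem_convexHull₂ convex_sepCone ?_ hρ hσ)
  rintro _ ⟨m, n, hm, -, hn, -, rfl⟩ _ ⟨w, z, hw, hw1, hz, hz1, rfl⟩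
  have : Nonempty γ := (nonempty_of_trace_eq_one hw1).map Prod.snd
  have : Nonempty δ := (nonempty_of_trace_eq_one hz1).map Prod.snd
  rw [prodOp_eq_kronecker, prodOp_eq_kronecker, tensorBipDual_kronecker_kronecker]
  exact kronecker_mem_sepCone (hm.partialTraceWith hw) (hn.partialTraceWith hz)

section RestrictedNorms
variable {α β γ δ : Type} [Fintype α] [DecidableEq α] [Fintype β] [DecidableEq β]
  [Fintype γ] [DecidableEq γ] [Fintype δ] [DecidableEq δ]

theorem sepNorm_eq_sSup_mvalSet (X : Matrix (α × β) (α × β) ℂ) :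
    sepNorm X = sSup (mvalSet (· ∈ SepCone α β) X) := rfl

theorem pptNorm_eq_sSup_mvalSet (X : Matrix (α × β) (α × β) ℂ) :
    pptNorm X = sSup (mvalSet (fun T => (ptranspose T).PosSemidef) X) := rfl

theorem mvalSet_subset_mvalSet_tensorBip {C : Matrix (γ × δ) (γ × δ) ℂ → Prop}
    {D : Matrix ((α × γ) × (β × δ)) ((α × γ) × (β × δ)) ℂ → Prop}
    {ρ : Matrix (α × β) (α × β) ℂ} (hρtr : ρ.trace = 1) (X : Matrix (γ × δ) (γ × δ) ℂ)
    (hCD : ∀ T, C T → D (tensorBip 1 T)) : mvalSet C X ⊆ mvalSet D (tensorBip ρ X) :=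
  mvalSet_subset_of_dual (tensorBipₗ α β γ δ 1) (fun _ hT => PosSemidef.one.tensorBip hT)
    tensorBip_one hCD fun T => by
      change (tensorBip 1 T * tensorBip ρ X).trace = _
      rw [tensorBip_mul, one_mul, trace_tensorBip, hρtr, one_mul]

theorem mvalSet_tensorBip_subset_mvalSet {C : Matrix (γ × δ) (γ × δ) ℂ → Prop}
    {D : Matrix ((α × γ) × (β × δ)) ((α × γ) × (β × δ)) ℂ → Prop}
    {ρ : Matrix (α × β) (α × β) ℂ} (hρ : ρ.PosSemidef) (hρtr : ρ.trace = 1)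
    (X : Matrix (γ × δ) (γ × δ) ℂ) (hDC : ∀ Q, D Q → C (tensorBipDual α β γ δ ρ Q)) :
    mvalSet D (tensorBip ρ X) ⊆ mvalSet C X :=
  mvalSet_subset_of_dual (tensorBipDual α β γ δ ρ) (fun _ hQ => hρ.tensorBipDual hQ)
    (by rw [tensorBipDual_one, hρtr, one_smul]) hDC fun Q => trace_tensorBipDual_mul ρ Q X

end RestrictedNorms

theorem restrictedNorm_tensor_state_general {α β γ δ : Type}
    [Fintype α] [DecidableEq α] [Fintype β] [DecidableEq β]
    [Fintype γ] [DecidableEq γ] [Fintype δ] [DecidableEq δ]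
    (X : Matrix (γ × δ) (γ × δ) ℂ)
    (ρ : Matrix (α × β) (α × β) ℂ) (hρ : ρ.PosSemidef) (hρtr : ρ.trace = 1) :
    (sepNorm X ≤ sepNorm (tensorBip ρ X)) ∧
    (pptNorm X ≤ pptNorm (tensorBip ρ X)) ∧
    (ρ ∈ SepStates α β → sepNorm (tensorBip ρ X) = sepNorm X) ∧
    ((ptranspose ρ).PosSemidef → pptNorm (tensorBip ρ X) = pptNorm X) := by
  obtain ⟨a, b⟩ := (nonempty_of_trace_eq_one hρtr).some
  have : Nonempty α := ⟨a⟩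
  have : Nonempty β := ⟨b⟩
  simp only [sepNorm_eq_sSup_mvalSet, pptNorm_eq_sSup_mvalSet]
  have sep_lift := mvalSet_subset_mvalSet_tensorBip (C := (· ∈ SepCone γ δ))
    (D := (· ∈ SepCone (α × γ) (β × δ))) hρtr X fun _ hT =>
      tensorBip_mem_sepCone one_mem_sepCone hT
  have ppt_lift := mvalSet_subset_mvalSet_tensorBip (C := fun T => (ptranspose T).PosSemidef)
    (D := fun T => (ptranspose T).PosSemidef) hρtr X fun T hT => by
      rw [ptranspose_tensorBip, ptranspose_one]
      exact PosSemidef.one.tensorBip hT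
  refine ⟨sSup_mvalSet_mono sep_lift, sSup_mvalSet_mono ppt_lift, fun hsep => ?_, fun hppt => ?_⟩
  · exact congrArg sSup <| (mvalSet_tensorBip_subset_mvalSet hρ hρtr X fun _ hQ =>
      tensorBipDual_mem_sepCone hsep hQ).antisymm sep_lift
  · exact congrArg sSup <| (mvalSet_tensorBip_subset_mvalSet hρ hρtr X fun Q hQ => by
      rw [ptranspose_tensorBipDual]
      exact hppt.tensorBipDual hQ).antisymm ppt_lift

/-- For `M` either the class of separable or PPT measurements (with `K` the
separable resp. PPT states), for any Hermitian `X` on `A'B'` and state `ρ` on `CD`: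
(i) `‖X‖_{M(A':B')} ≤ ‖ρ ⊗ X‖_{M(CA':DB')}`; (ii) if moreover `ρ ∈ K(C:D)`, equality. -/
theorem restrictedNorm_tensor_state {α β γ δ : Type}
    [Fintype α] [DecidableEq α] [Fintype β] [DecidableEq β]
    [Fintype γ] [DecidableEq γ] [Fintype δ] [DecidableEq δ]
    (X : Matrix (γ × δ) (γ × δ) ℂ) (hX : X.IsHermitian)
    (ρ : Matrix (α × β) (α × β) ℂ) (hρ : ρ.PosSemidef) (hρtr : ρ.trace = 1) :
    (sepNorm X ≤ sepNorm (tensorBip ρ X)) ∧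
    (pptNorm X ≤ pptNorm (tensorBip ρ X)) ∧
    (ρ ∈ SepStates α β → sepNorm (tensorBip ρ X) = sepNorm X) ∧
    ((ptranspose ρ).PosSemidef → pptNorm (tensorBip ρ X) = pptNorm X) :=
  restrictedNorm_tensor_state_general X ρ hρ hρtr

end
end
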